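/- arXiv:2410.10797 — 8 statements merged into one kernel-verified Lean document; each statement's English description precedes it below -/
import Mathlib

section
/- Let μ be a probability measure on ℝ concentrated on (0,∞) such that the identity and x ↦ √x are μ-integrable and ∫ x dμ(x) = 1, and let m = ∫ √x dμ(x). Then for every p > 0 and every number of remaining steps k ∈ ℕ, the two branches in the definition of the value function are equal: ∫ opt(p·x, k) dμ(x) = profit(p) + √p · ∫ opt(x, k) dμ(x). In other words, in a fee-free constant product AMM whose relative price changes have mean 1, the time-advantaged arbitrageur is always indifferent between waiting one time step and arbitraging immediately. -/
open MeasureTheory Real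

/-- Maximal relative arbitrage profit for a fee-free constant product AMM
at relative price difference `p`. -/
noncomputable def profit0 (p : ℝ) : ℝ := p / 2 - Real.sqrt p + 1 / 2

/-- Value function of the time-advantaged arbitrageur, by backward induction on
the number of remaining time steps: either wait one step, or arbitrage immediately
(resetting the price difference to 1 and scaling the pool value by `√p`). -/
noncomputable def opt0 (μ : Measure ℝ) : ℕ → ℝ → ℝ
  | 0, p => profit0 p
  | (k + 1), p =>
      max (∫ x, opt0 μ k (p * x) ∂μ)
        (profit0 p + Real.sqrt p * ∫ x, opt0 μ k x ∂μ)

section Aux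

variable {μ : Measure ℝ} [IsProbabilityMeasure μ]

private lemma ae_pos' (hμ : μ (Set.Ioi (0 : ℝ)) = 1) : ∀ᵐ x ∂μ, 0 < x := by
  have hc : μ (Set.Ioi (0 : ℝ))ᶜ = 0 := by
    rw [measure_compl measurableSet_Ioi (measure_ne_top μ _), hμ, measure_univ]
    simp
  filter_upwards [measure_eq_zero_iff_ae_notMem.mp hc] with x hx
  simpa using hx

private lemma lin_integral (hid : Integrable (fun x : ℝ => x) μ)
    (hsqrt : Integrable (fun x : ℝ => Real.sqrt x) μ)
    (hmean : ∫ x, x ∂μ = 1) (a b c : ℝ) :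
    ∫ x, (a * x + b * Real.sqrt x + c) ∂μ = a + b * (∫ x, Real.sqrt x ∂μ) + c := by
  have ha : Integrable (fun x : ℝ => a * x) μ := hid.const_mul a
  have hb : Integrable (fun x : ℝ => b * Real.sqrt x) μ := hsqrt.const_mul b
  have hab : Integrable (fun x : ℝ => a * x + b * Real.sqrt x) μ := ha.add hb
  rw [integral_add hab (integrable_const c), integral_add ha hb,
    MeasureTheory.integral_const_mul, MeasureTheory.integral_const_mul, hmean, integral_const, probReal_univ]
  simp

private lemma closed_form (hμ : μ (Set.Ioi (0 : ℝ)) = 1)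
    (hid : Integrable (fun x : ℝ => x) μ)
    (hsqrt : Integrable (fun x : ℝ => Real.sqrt x) μ)
    (hmean : ∫ x, x ∂μ = 1) :
    ∀ k : ℕ, ∀ p : ℝ, 0 < p →
      opt0 μ k p = p / 2 - (∫ x, Real.sqrt x ∂μ) ^ k * Real.sqrt p + 1 / 2 := by
  set m := ∫ x, Real.sqrt x ∂μ with hm
  intro k
  induction k with
  | zero => intro p hp; simp [opt0, profit0]
  | succ k ih =>
    intro p hp
    have hwait : ∫ x, opt0 μ k (p * x) ∂μ = p / 2 - m ^ (k + 1) * Real.sqrt p + 1 / 2 := by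
      have h1 : ∫ x, opt0 μ k (p * x) ∂μ
          = ∫ x, ((p / 2) * x + (-(m ^ k * Real.sqrt p)) * Real.sqrt x + 1 / 2) ∂μ := by
        refine integral_congr_ae ?_
        filter_upwards [ae_pos' hμ] with x hx
        rw [ih (p * x) (mul_pos hp hx), Real.sqrt_mul hp.le]
        ring
      rw [h1, lin_integral hid hsqrt hmean, pow_succ]
      ring
    have htot : ∫ x, opt0 μ k x ∂μ = 1 - m ^ (k + 1) := by
      have h1 : ∫ x, opt0 μ k x ∂μ
          = ∫ x, ((1 / 2 : ℝ) * x + (-(m ^ k)) * Real.sqrt x + 1 / 2) ∂μ := by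
        refine integral_congr_ae ?_
        filter_upwards [ae_pos' hμ] with x hx
        rw [ih x hx]
        ring
      rw [h1, lin_integral hid hsqrt hmean, pow_succ]
      ring
    show max _ _ = _
    rw [hwait, htot, profit0]
    rw [show p / 2 - Real.sqrt p + 1 / 2 + Real.sqrt p * (1 - m ^ (k + 1))
        = p / 2 - m ^ (k + 1) * Real.sqrt p + 1 / 2 by ring, max_self]

end Aux

/-- With zero trading fee and price changes of mean 1, the time-advantaged
arbitrageur is always indifferent between waiting one step and arbitraging. -/
theorem indifference_wait_arb (μ : Measure ℝ) [IsProbabilityMeasure μ]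
    (hμ : μ (Set.Ioi (0 : ℝ)) = 1)
    (hid : Integrable (fun x : ℝ => x) μ)
    (hsqrt : Integrable (fun x : ℝ => Real.sqrt x) μ)
    (hmean : ∫ x, x ∂μ = 1) :
    ∀ p : ℝ, 0 < p → ∀ k : ℕ,
      ∫ x, opt0 μ k (p * x) ∂μ
        = profit0 p + Real.sqrt p * ∫ x, opt0 μ k x ∂μ := by
  intro p hp k
  set m := ∫ x, Real.sqrt x ∂μ with hm
  have hwait : ∫ x, opt0 μ k (p * x) ∂μ = p / 2 - m ^ (k + 1) * Real.sqrt p + 1 / 2 := by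
    have h1 : ∫ x, opt0 μ k (p * x) ∂μ
        = ∫ x, ((p / 2) * x + (-(m ^ k * Real.sqrt p)) * Real.sqrt x + 1 / 2) ∂μ := by
      refine integral_congr_ae ?_
      filter_upwards [ae_pos' hμ] with x hx
      rw [closed_form hμ hid hsqrt hmean k (p * x) (mul_pos hp hx), Real.sqrt_mul hp.le]
      ring
    rw [h1, lin_integral hid hsqrt hmean, pow_succ]
    ring
  have htot : ∫ x, opt0 μ k x ∂μ = 1 - m ^ (k + 1) := by
    have h1 : ∫ x, opt0 μ k x ∂μ
        = ∫ x, ((1 / 2 : ℝ) * x + (-(m ^ k)) * Real.sqrt x + 1 / 2) ∂μ := by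
      refine integral_congr_ae ?_
      filter_upwards [ae_pos' hμ] with x hx
      rw [closed_form hμ hid hsqrt hmean k x hx]
      ring
    rw [h1, lin_integral hid hsqrt hmean, pow_succ]
    ring
  rw [hwait, htot, profit0]
  ring
end

section
/- Let μ be a probability measure on ℝ concentrated on (0,∞) such that the identity and x ↦ √x are μ-integrable and ∫ x dμ(x) = 1, and let m = ∫ √x dμ(x). Then for every p > 0 and every number of remaining steps k ∈ ℕ, the optimal expected profit of the time-advantaged arbitrageur satisfies the closed form opt(p, k) = p/2 − √p · m^k + 1/2. -/
open MeasureTheory Real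

/-- Closed form for the optimal expected profit of the time-advantaged
arbitrageur: `opt(p, k) = p/2 − √p · m^k + 1/2` where `m = ∫ √x dμ(x)`. -/
theorem opt_closed_form (μ : Measure ℝ) [IsProbabilityMeasure μ]
    (hμ : μ (Set.Ioi (0 : ℝ)) = 1)
    (hid : Integrable (fun x : ℝ => x) μ)
    (hsqrt : Integrable (fun x : ℝ => Real.sqrt x) μ)
    (hmean : ∫ x, x ∂μ = 1)
    (m : ℝ) (hm : m = ∫ x, Real.sqrt x ∂μ) :
    ∀ p : ℝ, 0 < p → ∀ k : ℕ,
      opt0 μ k p = p / 2 - Real.sqrt p * m ^ k + 1 / 2 := by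
  have hae : ∀ᵐ x ∂μ, 0 < x := by
    rw [ae_iff]
    have h : {x : ℝ | ¬ 0 < x} = (Set.Ioi (0:ℝ))ᶜ := by ext x; simp [Set.mem_Ioi]
    rw [h, measure_compl measurableSet_Ioi (measure_ne_top μ _), hμ, measure_univ]
    simp
  intro p hp k
  induction k generalizing p with
  | zero => simp [opt0, profit0]
  | succ k ih =>
    have key : ∀ q : ℝ, 0 < q →
        (∫ x, opt0 μ k (q * x) ∂μ) = q/2 - Real.sqrt q * m ^ (k+1) + 1/2 := by
      intro q hq
      have hcongr : (∫ x, opt0 μ k (q * x) ∂μ)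
          = ∫ x, ((q/2) * x - (Real.sqrt q * m ^ k) * Real.sqrt x + 1/2) ∂μ := by
        apply integral_congr_ae
        filter_upwards [hae] with x hx
        rw [ih (q * x) (mul_pos hq hx), Real.sqrt_mul hq.le]
        ring
      have e1 : ∫ x, ((q/2) * x - (Real.sqrt q * m ^ k) * Real.sqrt x + 1/2) ∂μ
          = (∫ x, ((q/2) * x - (Real.sqrt q * m ^ k) * Real.sqrt x) ∂μ)
            + ∫ _x, (1/2 : ℝ) ∂μ :=
        integral_add ((hid.const_mul _).sub (hsqrt.const_mul _)) (integrable_const _)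
      have e2 : ∫ x, ((q/2) * x - (Real.sqrt q * m ^ k) * Real.sqrt x) ∂μ
          = (∫ x, (q/2) * x ∂μ) - ∫ x, (Real.sqrt q * m ^ k) * Real.sqrt x ∂μ :=
        integral_sub (hid.const_mul _) (hsqrt.const_mul _)
      rw [hcongr, e1, e2, integral_const_mul, integral_const_mul, hmean, ← hm,
        integral_const]
      simp only [measure_univ, probReal_univ, ENNReal.toReal_one, smul_eq_mul, one_mul, mul_one]
      ring
    have h1 : (∫ x, opt0 μ k x ∂μ) = 1/2 - m ^ (k+1) + 1/2 := by
      have := key 1 one_pos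
      simpa using this
    show max (∫ x, opt0 μ k (p * x) ∂μ)
        (profit0 p + Real.sqrt p * ∫ x, opt0 μ k x ∂μ) = _
    rw [key p hp, h1, profit0]
    rw [max_eq_left (le_of_eq (by ring))]
end

section
/- Let Δ > 0, σ ∈ ℝ, and let μ be the pushforward of the Gaussian measure on ℝ with mean 0 and variance Δ under the map x ↦ exp(−σ²Δ/2 + σx) (the one-step price-change distribution of a driftless geometric Brownian motion with volatility σ). Then for all p > 0 and all k ∈ ℕ, the optimal expected profit of the time-advantaged arbitrageur is opt(p, k) = p/2 − √p · e^{−σ²kΔ/8} + 1/2. In particular, over a horizon T = kΔ, opt(p, k) = p/2 − √p · e^{−σ²T/8} + 1/2. -/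
open MeasureTheory Real ProbabilityTheory
open scoped ENNReal NNReal

lemma gauss_pdf_mul (Δ : ℝ) (hΔ : 0 < Δ) (t x : ℝ) :
    gaussianPDFReal 0 Δ.toNNReal x * rexp (t * x)
      = rexp (t ^ 2 * Δ / 2) * gaussianPDFReal (t * Δ) Δ.toNNReal x := by
  have hΔ' : (Δ.toNNReal : ℝ) = Δ := Real.coe_toNNReal _ hΔ.le
  have key : rexp (-(x - 0) ^ 2 / (2 * Δ)) * rexp (t * x)
      = rexp (t ^ 2 * Δ / 2) * rexp (-(x - t * Δ) ^ 2 / (2 * Δ)) := by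
    rw [← Real.exp_add, ← Real.exp_add]
    congr 1
    field_simp
    ring
  simp only [gaussianPDFReal, hΔ']
  calc (√(2 * π * Δ))⁻¹ * rexp (-(x - 0) ^ 2 / (2 * Δ)) * rexp (t * x)
      = (√(2 * π * Δ))⁻¹ * (rexp (-(x - 0) ^ 2 / (2 * Δ)) * rexp (t * x)) := by ring
    _ = (√(2 * π * Δ))⁻¹ * (rexp (t ^ 2 * Δ / 2) * rexp (-(x - t * Δ) ^ 2 / (2 * Δ))) := by
        rw [key]
    _ = rexp (t ^ 2 * Δ / 2) * ((√(2 * π * Δ))⁻¹ * rexp (-(x - t * Δ) ^ 2 / (2 * Δ))) := by ring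

lemma gauss_wd (Δ : ℝ) (hΔ : 0 < Δ) :
    gaussianReal 0 Δ.toNNReal
      = volume.withDensity (fun x => ((gaussianPDFReal 0 Δ.toNNReal x).toNNReal : ℝ≥0∞)) := by
  have hv : Δ.toNNReal ≠ 0 := by simp [Real.toNNReal_eq_zero, not_le, hΔ]
  rw [gaussianReal_of_var_ne_zero _ hv]
  rfl

lemma gauss_pdf_meas (Δ : ℝ) : Measurable fun x => (gaussianPDFReal 0 Δ.toNNReal x).toNNReal :=
  (measurable_gaussianPDFReal _ _).real_toNNReal

lemma gauss_smul_eq (Δ : ℝ) (hΔ : 0 < Δ) (t : ℝ) :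
    (fun x => ((gaussianPDFReal 0 Δ.toNNReal x).toNNReal : ℝ≥0) • rexp (t * x))
      = fun x => rexp (t ^ 2 * Δ / 2) * gaussianPDFReal (t * Δ) Δ.toNNReal x := by
  funext x
  rw [NNReal.smul_def, Real.coe_toNNReal _ (gaussianPDFReal_nonneg _ _ _), smul_eq_mul,
    gauss_pdf_mul Δ hΔ t x]

lemma gauss_exp_integrable (Δ : ℝ) (hΔ : 0 < Δ) (t : ℝ) :
    Integrable (fun x => rexp (t * x)) (gaussianReal 0 Δ.toNNReal) := by
  rw [gauss_wd Δ hΔ, integrable_withDensity_iff_integrable_smul (gauss_pdf_meas Δ)]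
  rw [gauss_smul_eq Δ hΔ t]
  exact (integrable_gaussianPDFReal _ _).const_mul _

lemma gauss_mgf (Δ : ℝ) (hΔ : 0 < Δ) (t : ℝ) :
    ∫ x, rexp (t * x) ∂(gaussianReal 0 Δ.toNNReal) = rexp (t ^ 2 * Δ / 2) := by
  have hv : Δ.toNNReal ≠ 0 := by simp [Real.toNNReal_eq_zero, not_le, hΔ]
  rw [gauss_wd Δ hΔ, integral_withDensity_eq_integral_smul (gauss_pdf_meas Δ)]
  calc ∫ x, ((gaussianPDFReal 0 Δ.toNNReal x).toNNReal : ℝ≥0) • rexp (t * x)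
      = ∫ x, rexp (t ^ 2 * Δ / 2) * gaussianPDFReal (t * Δ) Δ.toNNReal x := by
        rw [gauss_smul_eq Δ hΔ t]
    _ = rexp (t ^ 2 * Δ / 2) * ∫ x, gaussianPDFReal (t * Δ) Δ.toNNReal x := integral_const_mul _ _
    _ = rexp (t ^ 2 * Δ / 2) := by rw [integral_gaussianPDFReal_eq_one _ hv, mul_one]

section Mu

variable (Δ : ℝ) (σ : ℝ)

lemma F_meas : Measurable (fun x => Real.exp (-σ ^ 2 * Δ / 2 + σ * x)) :=
  (measurable_const.add (measurable_id.const_mul σ)).exp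

lemma mu_ae_pos (hΔ : 0 < Δ) :
    ∀ᵐ y ∂((gaussianReal 0 Δ.toNNReal).map
      (fun x => Real.exp (-σ ^ 2 * Δ / 2 + σ * x))), 0 < y := by
  rw [ae_map_iff (F_meas Δ σ).aemeasurable measurableSet_Ioi]
  exact Filter.Eventually.of_forall fun x => Real.exp_pos _

lemma mu_int_id (hΔ : 0 < Δ) :
    Integrable (fun y => y) ((gaussianReal 0 Δ.toNNReal).map
      (fun x => Real.exp (-σ ^ 2 * Δ / 2 + σ * x)))
    ∧ ∫ y, y ∂((gaussianReal 0 Δ.toNNReal).map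
      (fun x => Real.exp (-σ ^ 2 * Δ / 2 + σ * x))) = 1 := by
  have hF : (fun x => Real.exp (-σ ^ 2 * Δ / 2 + σ * x))
      = fun x => Real.exp (-σ ^ 2 * Δ / 2) * rexp (σ * x) := by
    funext x; rw [← Real.exp_add]
  constructor
  · show Integrable id _
    rw [integrable_map_measure aestronglyMeasurable_id (F_meas Δ σ).aemeasurable]
    show Integrable (fun x => Real.exp (-σ ^ 2 * Δ / 2 + σ * x)) _
    rw [hF]
    exact (gauss_exp_integrable Δ hΔ σ).const_mul _
  · show ∫ y, id y ∂_ = 1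
    rw [integral_map (F_meas Δ σ).aemeasurable aestronglyMeasurable_id]
    show ∫ x, Real.exp (-σ ^ 2 * Δ / 2 + σ * x) ∂_ = 1
    rw [hF, integral_const_mul, gauss_mgf Δ hΔ σ, ← Real.exp_add]
    norm_num
    ring

lemma mu_int_sqrt (hΔ : 0 < Δ) :
    Integrable Real.sqrt ((gaussianReal 0 Δ.toNNReal).map
      (fun x => Real.exp (-σ ^ 2 * Δ / 2 + σ * x)))
    ∧ ∫ y, Real.sqrt y ∂((gaussianReal 0 Δ.toNNReal).map
      (fun x => Real.exp (-σ ^ 2 * Δ / 2 + σ * x))) = rexp (-σ ^ 2 * Δ / 8) := by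
  have hs : AEStronglyMeasurable Real.sqrt ((gaussianReal 0 Δ.toNNReal).map
      (fun x => Real.exp (-σ ^ 2 * Δ / 2 + σ * x))) :=
    Real.continuous_sqrt.aestronglyMeasurable
  have hF : (fun x => Real.sqrt (Real.exp (-σ ^ 2 * Δ / 2 + σ * x)))
      = fun x => Real.exp (-σ ^ 2 * Δ / 4) * rexp ((σ / 2) * x) := by
    funext x
    rw [← Real.exp_half, ← Real.exp_add]
    congr 1
    ring
  constructor
  · rw [integrable_map_measure hs (F_meas Δ σ).aemeasurable]
    show Integrable (fun x => Real.sqrt (Real.exp (-σ ^ 2 * Δ / 2 + σ * x))) _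
    rw [hF]
    exact (gauss_exp_integrable Δ hΔ (σ / 2)).const_mul _
  · rw [integral_map (F_meas Δ σ).aemeasurable hs]
    show ∫ x, Real.sqrt (Real.exp (-σ ^ 2 * Δ / 2 + σ * x)) ∂_ = _
    rw [hF, integral_const_mul, gauss_mgf Δ hΔ (σ / 2), ← Real.exp_add]
    congr 1
    ring

end Mu

lemma integral_affine (ν : Measure ℝ) [IsProbabilityMeasure ν]
    (h1 : Integrable (fun y => y) ν) (h2 : Integrable Real.sqrt ν) (a b c : ℝ) :
    ∫ x, (a * x - b * Real.sqrt x + c) ∂ν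
      = a * (∫ y, y ∂ν) - b * (∫ y, Real.sqrt y ∂ν) + c := by
  have hf : Integrable (fun x => a * x - b * Real.sqrt x) ν :=
    (h1.const_mul a).sub (h2.const_mul b)
  rw [integral_add hf (integrable_const c),
    integral_sub (h1.const_mul a) (h2.const_mul b),
    integral_const_mul, integral_const_mul, integral_const]
  simp


/-- For a driftless geometric Brownian motion price model with volatility `σ`
and time step `Δ`, the optimal expected profit of the time-advantaged
arbitrageur is `opt(p, k) = p/2 − √p · e^{−σ²kΔ/8} + 1/2`. -/
theorem opt_closed_form_gbm (Δ : ℝ) (hΔ : 0 < Δ) (σ : ℝ)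
    (μ : Measure ℝ)
    (hμdef : μ = (gaussianReal 0 Δ.toNNReal).map
      (fun x => Real.exp (-σ ^ 2 * Δ / 2 + σ * x))) :
    ∀ p : ℝ, 0 < p → ∀ k : ℕ,
      opt0 μ k p
        = p / 2 - Real.sqrt p * Real.exp (-σ ^ 2 * k * Δ / 8) + 1 / 2 := by
  subst hμdef
  set μ' := (gaussianReal 0 Δ.toNNReal).map
      (fun x => Real.exp (-σ ^ 2 * Δ / 2 + σ * x)) with hμ'
  haveI : IsProbabilityMeasure μ' := Measure.isProbabilityMeasure_map (F_meas Δ σ).aemeasurable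
  obtain ⟨hInt1, hI1⟩ := mu_int_id Δ σ hΔ
  obtain ⟨hInt2, hI2⟩ := mu_int_sqrt Δ σ hΔ
  have hpos := mu_ae_pos Δ σ hΔ
  rw [← hμ'] at hInt1 hI1 hInt2 hI2 hpos
  set M := rexp (-σ ^ 2 * Δ / 8) with hM
  intro p hp k
  induction k generalizing p with
  | zero => simp [opt0, profit0]
  | succ k ih =>
    have hEk1 : rexp (-σ ^ 2 * ((k : ℝ) + 1) * Δ / 8)
        = rexp (-σ ^ 2 * (k : ℝ) * Δ / 8) * M := by
      rw [hM, ← Real.exp_add]; congr 1; ring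
    have key : ∀ q : ℝ, 0 < q → ∫ x, opt0 μ' k (q * x) ∂μ'
        = q / 2 - Real.sqrt q * (rexp (-σ ^ 2 * (k : ℝ) * Δ / 8) * M) + 1 / 2 := by
      intro q hq
      have hcong : ∀ᵐ x ∂μ', opt0 μ' k (q * x)
          = (q / 2 * x - (Real.sqrt q * rexp (-σ ^ 2 * (k : ℝ) * Δ / 8)) * Real.sqrt x
            + 1 / 2) := by
        filter_upwards [hpos] with x hx
        rw [ih (q * x) (mul_pos hq hx), Real.sqrt_mul hq.le]
        ring
      rw [integral_congr_ae hcong, integral_affine μ' hInt1 hInt2, hI1, hI2]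
      ring
    have key2 : ∫ x, opt0 μ' k x ∂μ'
        = 1 - rexp (-σ ^ 2 * (k : ℝ) * Δ / 8) * M := by
      have hcong : ∀ᵐ x ∂μ', opt0 μ' k x
          = (1 / 2 * x - (1 * rexp (-σ ^ 2 * (k : ℝ) * Δ / 8)) * Real.sqrt x + 1 / 2) := by
        filter_upwards [hpos] with x hx
        rw [ih x hx]
        ring
      rw [integral_congr_ae hcong, integral_affine μ' hInt1 hInt2, hI1, hI2]
      ring
    show max (∫ x, opt0 μ' k (p * x) ∂μ') (profit0 p + Real.sqrt p * ∫ x, opt0 μ' k x ∂μ')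
        = p / 2 - Real.sqrt p * rexp (-σ ^ 2 * ((k : ℕ) + 1 : ℕ) * Δ / 8) + 1 / 2
    rw [key p hp, key2]
    have hA : profit0 p + Real.sqrt p * (1 - rexp (-σ ^ 2 * (k : ℝ) * Δ / 8) * M)
        = p / 2 - Real.sqrt p * (rexp (-σ ^ 2 * (k : ℝ) * Δ / 8) * M) + 1 / 2 := by
      simp only [profit0]; ring
    rw [hA, max_self]
    push_cast
    rw [hEk1]
end

section
/- Let X, Y > 0 be the reserves of a constant product AMM with trading fee f ∈ [0,1), and let the external price satisfy 0 < P < (1−f)·Y/X. For a trade selling d ≥ 0 units of the risky asset to the pool, the amount received is Δy(d) = Y − XY/(X + (1−f)d) and the arbitrage profit is g(d) = Δy(d) − d·P. Then g attains its maximum on [0, ∞) uniquely at d* = (√((1−f)XY/P) − X)/(1−f), and the maximal profit is g(d*) = XP/(1−f) − 2√(XYP/(1−f)) + Y = Y·(p/(1−f) − (2/√(1−f))√p + 1) where p = XP/Y. -/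
open Real

private lemma eq_of_sq_eq' {a b : ℝ} (ha : 0 ≤ a) (hb : 0 ≤ b) (h : a ^ 2 = b ^ 2) :
    a = b := by
  rw [← Real.sqrt_sq ha, ← Real.sqrt_sq hb, h]

set_option maxHeartbeats 1000000 in
/-- Sell-side maximal arbitrage against a constant product AMM with fee `f`:
when the external price is below the pool's marginal sell price, the profit
`g(d) = (Y − XY/(X + (1−f)d)) − d·P` is uniquely maximized on `[0, ∞)`
at `d* = (√((1−f)XY/P) − X)/(1−f)`, with the stated maximal value. -/
theorem sell_side_max_arbitrage (X Y f P : ℝ) (hX : 0 < X) (hY : 0 < Y)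
    (hf0 : 0 ≤ f) (hf1 : f < 1) (hP0 : 0 < P) (hP : P < (1 - f) * Y / X) :
    let g : ℝ → ℝ := fun d => (Y - X * Y / (X + (1 - f) * d)) - d * P
    let dstar : ℝ := (Real.sqrt ((1 - f) * X * Y / P) - X) / (1 - f)
    dstar ∈ Set.Ici (0 : ℝ) ∧
    (∀ d ∈ Set.Ici (0 : ℝ), g d ≤ g dstar) ∧
    (∀ d ∈ Set.Ici (0 : ℝ), g d = g dstar → d = dstar) ∧
    g dstar = X * P / (1 - f) - 2 * Real.sqrt (X * Y * P / (1 - f)) + Y ∧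
    g dstar = Y * ((X * P / Y) / (1 - f)
      - (2 / Real.sqrt (1 - f)) * Real.sqrt (X * P / Y) + 1) := by
  intro g dstar
  have hc : 0 < 1 - f := by linarith
  have hg : ∀ d : ℝ, g d = (Y - X * Y / (X + (1 - f) * d)) - d * P := fun d => rfl
  have hds : dstar = (Real.sqrt ((1 - f) * X * Y / P) - X) / (1 - f) := rfl
  set a := Real.sqrt (P / (1 - f)) with hadef
  set b := Real.sqrt (X * Y) with hbdef
  have ha : 0 < a := Real.sqrt_pos.mpr (by positivity)
  have hb : 0 < b := Real.sqrt_pos.mpr (by positivity)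
  have ha2 : a ^ 2 = P / (1 - f) := Real.sq_sqrt (by positivity)
  have hb2 : b ^ 2 = X * Y := Real.sq_sqrt (by positivity)
  clear_value a b
  have hs : Real.sqrt ((1 - f) * X * Y / P) = b / a := by
    apply eq_of_sq_eq' (Real.sqrt_nonneg _) (by positivity)
    rw [Real.sq_sqrt (by positivity), div_pow, ha2, hb2]
    field_simp
  -- from the price condition: X * a < b
  have h1 : P * X < (1 - f) * Y := (lt_div_iff₀ hX).mp hP
  have hXab : X * a < b := by
    have hsq : (X * a) ^ 2 < b ^ 2 := by
      rw [mul_pow, ha2, hb2]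
      have h2 : X ^ 2 * (P / (1 - f)) = X ^ 2 * P / (1 - f) := by ring
      rw [h2, div_lt_iff₀ hc]
      nlinarith
    exact lt_of_pow_lt_pow_left₀ 2 hb.le hsq
  have hXba : X < b / a := (lt_div_iff₀ ha).mpr hXab
  have hdstar0 : 0 ≤ dstar := by
    rw [hds, hs]
    apply div_nonneg _ hc.le
    linarith
  -- representation of g
  have key : ∀ d : ℝ, 0 ≤ d →
      g d = Y + X * P / (1 - f)
        - (b ^ 2 / (X + (1 - f) * d) + a ^ 2 * (X + (1 - f) * d)) := by
    intro d hd
    have hu : 0 < X + (1 - f) * d := by nlinarith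
    rw [hg d, hb2, ha2]
    field_simp
    ring
  have hustar : X + (1 - f) * dstar = b / a := by
    rw [hds, hs]
    field_simp
    ring
  have gstar : g dstar = Y + X * P / (1 - f) - 2 * (a * b) := by
    rw [key dstar hdstar0, hustar]
    field_simp
    ring
  refine ⟨hdstar0, ?_, ?_, ?_, ?_⟩
  · intro d hd
    have hd0 : (0 : ℝ) ≤ d := hd
    have hu : 0 < X + (1 - f) * d := by nlinarith
    rw [key d hd0, gstar]
    have hrw : b ^ 2 / (X + (1 - f) * d) + a ^ 2 * (X + (1 - f) * d) - 2 * (a * b)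
        = (a * (X + (1 - f) * d) - b) ^ 2 / (X + (1 - f) * d) := by
      field_simp
      ring
    have hpos : 0 ≤ (a * (X + (1 - f) * d) - b) ^ 2 / (X + (1 - f) * d) :=
      div_nonneg (sq_nonneg _) hu.le
    linarith
  · intro d hd heq
    have hd0 : (0 : ℝ) ≤ d := hd
    have hu : 0 < X + (1 - f) * d := by nlinarith
    rw [key d hd0, gstar] at heq
    have heq' : b ^ 2 / (X + (1 - f) * d) + a ^ 2 * (X + (1 - f) * d) = 2 * (a * b) := by
      linarith
    have h3 : b ^ 2 + a ^ 2 * (X + (1 - f) * d) ^ 2 = 2 * (a * b) * (X + (1 - f) * d) := by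
      field_simp at heq'
      linarith
    have h2 : (a * (X + (1 - f) * d) - b) ^ 2 = 0 := by
      have : (a * (X + (1 - f) * d) - b) ^ 2
          = b ^ 2 + a ^ 2 * (X + (1 - f) * d) ^ 2 - 2 * (a * b) * (X + (1 - f) * d) := by
        ring
      rw [this, h3]
      ring
    have h4 : a * (X + (1 - f) * d) = b := by
      have := pow_eq_zero_iff (n := 2) (by norm_num) |>.mp h2
      linarith
    have h5 : X + (1 - f) * d = b / a := by
      field_simp
      linarith
    have h6 : X + (1 - f) * d = X + (1 - f) * dstar := by rw [h5, hustar]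
    have h7 : (1 - f) * d = (1 - f) * dstar := by linarith
    exact mul_left_cancel₀ (ne_of_gt hc) h7
  · have he1 : Real.sqrt (X * Y * P / (1 - f)) = a * b := by
      apply eq_of_sq_eq' (Real.sqrt_nonneg _) (by positivity)
      rw [Real.sq_sqrt (by positivity), mul_pow, ha2, hb2]
      ring
    rw [gstar, he1]
    ring
  · have hsc : 0 < Real.sqrt (1 - f) := Real.sqrt_pos.mpr hc
    have he2 : Y * Real.sqrt (X * P / Y) / Real.sqrt (1 - f) = a * b := by
      apply eq_of_sq_eq' (by positivity) (by positivity)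
      rw [div_pow, mul_pow, mul_pow, ha2, hb2,
        Real.sq_sqrt (by positivity : (0:ℝ) ≤ X * P / Y),
        Real.sq_sqrt hc.le]
      field_simp
    have expand : Y * ((X * P / Y) / (1 - f)
        - (2 / Real.sqrt (1 - f)) * Real.sqrt (X * P / Y) + 1)
        = X * P / (1 - f) - 2 * (Y * Real.sqrt (X * P / Y) / Real.sqrt (1 - f)) + Y := by
      field_simp
    rw [gstar, expand, he2]
    ring
end

section
/- Let X, Y > 0 be the reserves of a constant product AMM with trading fee f ∈ [0,1), and suppose the external price satisfies (1−f)·Y/X ≤ P ≤ Y/((1−f)X). Then no arbitrage trade is profitable: for every d ∈ [0, X), the buy-side profit d·P − (1/(1−f))·(XY/(X−d) − Y) ≤ 0, and for every d ≥ 0, the sell-side profit (Y − XY/(X + (1−f)d)) − d·P ≤ 0. -/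
open Real

/-- If the external price lies within the no-arbitrage band
`[(1−f)·Y/X, Y/((1−f)·X)]` of a constant product AMM with fee `f`, then
neither buying from nor selling to the pool is profitable. -/
theorem no_arbitrage_band (X Y f P : ℝ) (hX : 0 < X) (hY : 0 < Y)
    (hf0 : 0 ≤ f) (hf1 : f < 1)
    (hPlo : (1 - f) * Y / X ≤ P) (hPhi : P ≤ Y / ((1 - f) * X)) :
    (∀ d ∈ Set.Ico (0 : ℝ) X,
      d * P - (1 / (1 - f)) * (X * Y / (X - d) - Y) ≤ 0) ∧
    (∀ d : ℝ, 0 ≤ d →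
      (Y - X * Y / (X + (1 - f) * d)) - d * P ≤ 0) := by
  have hg : 0 < 1 - f := by linarith
  constructor
  · rintro d ⟨hd0, hdX⟩
    have hXd : 0 < X - d := by linarith
    have h1 : d * P ≤ d * (Y / ((1 - f) * X)) :=
      mul_le_mul_of_nonneg_left hPhi hd0
    have key : (1 / (1 - f)) * (X * Y / (X - d) - Y) = d * Y / ((1 - f) * (X - d)) := by
      field_simp
      ring
    have h2 : d * (Y / ((1 - f) * X)) ≤ (1 / (1 - f)) * (X * Y / (X - d) - Y) := by
      rw [key, ← mul_div_assoc]
      gcongr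
      · linarith
    linarith
  · intro d hd0
    have hden : 0 < X + (1 - f) * d := by nlinarith
    have h1 : d * ((1 - f) * Y / X) ≤ d * P :=
      mul_le_mul_of_nonneg_left hPlo hd0
    have key : Y - X * Y / (X + (1 - f) * d) = (1 - f) * d * Y / (X + (1 - f) * d) := by
      field_simp
      ring
    have h2 : Y - X * Y / (X + (1 - f) * d) ≤ d * ((1 - f) * Y / X) := by
      rw [key, show d * ((1 - f) * Y / X) = (1 - f) * d * Y / X by ring]
      gcongr
      · nlinarith
    linarith
end

section
/- Let Y > 0 and p > 1. The α = 1 arbitrage profit function h₁(p₁) = Y·(p/2 − p/(2p₁) − p₁/2 + 1/2) attains its maximum over p₁ ∈ [1, p] uniquely at p₁ = √p, with maximal value Y·(p/2 − √p + 1/2) = (1/2)·Y·(√p − 1)², i.e. exactly half of the maximum arbitrage profit MAP = Y·(p − 2√p + 1). -/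
open Real

/-- For the `α = 1` MEV-capture mechanism, the arbitrageur's profit
`h₁(p₁) = Y·(p/2 − p/(2p₁) − p₁/2 + 1/2)` is uniquely maximized over
`p₁ ∈ [1, p]` at `p₁ = √p`, with maximal value `Y·(p/2 − √p + 1/2)`, i.e.
half of the maximum arbitrage profit `MAP = Y·(p − 2√p + 1)`. -/
theorem alpha_one_best_response (Y p : ℝ) (hY : 0 < Y) (hp : 1 < p) :
    let h₁ : ℝ → ℝ := fun p₁ =>
      Y * (p / 2 - p / (2 * p₁) - p₁ / 2 + 1 / 2)
    Real.sqrt p ∈ Set.Icc (1 : ℝ) p ∧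
    (∀ q ∈ Set.Icc (1 : ℝ) p, h₁ q ≤ h₁ (Real.sqrt p)) ∧
    (∀ q ∈ Set.Icc (1 : ℝ) p, h₁ q = h₁ (Real.sqrt p) → q = Real.sqrt p) ∧
    h₁ (Real.sqrt p) = Y * (p / 2 - Real.sqrt p + 1 / 2) ∧
    h₁ (Real.sqrt p) = (1 / 2) * (Y * (p - 2 * Real.sqrt p + 1)) ∧
    Y * (p / 2 - Real.sqrt p + 1 / 2) = (1 / 2) * Y * (Real.sqrt p - 1) ^ 2 := by
  intro h₁
  set s := Real.sqrt p with hs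
  have hp0 : (0 : ℝ) < p := lt_trans one_pos hp
  have hs2 : s ^ 2 = p := Real.sq_sqrt hp0.le
  have hsn : 0 ≤ s := Real.sqrt_nonneg p
  have hs1 : 1 < s := by nlinarith
  have hs0 : 0 < s := lt_trans one_pos hs1
  have hsp : s ≤ p := by nlinarith
  have key : ∀ q : ℝ, 0 < q → h₁ s - h₁ q = Y * ((q - s) ^ 2 / (2 * q)) := by
    intro q hq
    show Y * (p / 2 - p / (2 * s) - s / 2 + 1 / 2)
        - Y * (p / 2 - p / (2 * q) - q / 2 + 1 / 2)
        = Y * ((q - s) ^ 2 / (2 * q))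
    rw [← hs2]
    field_simp
    ring
  refine ⟨⟨hs1.le, hsp⟩, ?_, ?_, ?_, ?_, ?_⟩
  · intro q ⟨hq1, hq2⟩
    have hq0 : 0 < q := lt_of_lt_of_le one_pos hq1
    have hk := key q hq0
    have h2 : 0 ≤ Y * ((q - s) ^ 2 / (2 * q)) := by positivity
    linarith
  · intro q ⟨hq1, hq2⟩ heq
    have hq0 : 0 < q := lt_of_lt_of_le one_pos hq1
    have hk := key q hq0
    rw [heq, sub_self] at hk
    by_contra h
    have h2 : 0 < (q - s) ^ 2 := pow_two_pos_of_ne_zero (sub_ne_zero.mpr h)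
    have h3 : 0 < Y * ((q - s) ^ 2 / (2 * q)) := by positivity
    linarith
  · show Y * (p / 2 - p / (2 * s) - s / 2 + 1 / 2) = Y * (p / 2 - s + 1 / 2)
    rw [← hs2]; field_simp; ring
  · show Y * (p / 2 - p / (2 * s) - s / 2 + 1 / 2) = 1 / 2 * (Y * (p - 2 * s + 1))
    rw [← hs2]; field_simp; ring
  · rw [← hs2]; ring
end

section
/- The pool's share of the maximum arbitrage profit under the α = 1 mechanism tends to 1/4 as the price difference vanishes: lim_{p → 1} (√p − 2·p^{1/4} + 1)/(p − 2·√p + 1) = 1/4, where the numerator Y·(√p − 2·p^{1/4} + 1) is the value the pool captures when the arbitrageur best-responds by moving the price to p₁ = √p, and the denominator Y·(p − 2√p + 1) is the maximum arbitrage profit MAP (the limit is taken over p ≠ 1). -/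
open Real Filter

/-- Under the `α = 1` mechanism, the pool's share of the maximum arbitrage
profit tends to `1/4` as the price difference vanishes:
`lim_{p → 1, p ≠ 1} (√p − 2·p^{1/4} + 1)/(p − 2·√p + 1) = 1/4`. -/
theorem pool_share_limit_one_quarter :
    Tendsto
      (fun p : ℝ =>
        (Real.sqrt p - 2 * p ^ ((1 : ℝ) / 4) + 1) / (p - 2 * Real.sqrt p + 1))
      (nhdsWithin 1 {(1 : ℝ)}ᶜ) (nhds (1 / 4)) := by
  have hg : Tendsto (fun p : ℝ => 1 / (p ^ ((1 : ℝ) / 4) + 1) ^ 2)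
      (nhdsWithin 1 {(1 : ℝ)}ᶜ) (nhds (1 / 4)) := by
    have hc : ContinuousAt (fun p : ℝ => 1 / (p ^ ((1 : ℝ) / 4) + 1) ^ 2) 1 := by
      have h1 : ContinuousAt (fun p : ℝ => p ^ ((1 : ℝ) / 4)) 1 :=
        Real.continuousAt_rpow_const 1 _ (Or.inl one_ne_zero)
      have h2 : ((1 : ℝ) ^ ((1 : ℝ) / 4) + 1) ^ 2 ≠ 0 := by
        rw [Real.one_rpow]; norm_num
      exact (continuousAt_const.div (((h1.add continuousAt_const).pow 2)) h2)
    have := hc.tendsto.mono_left (nhdsWithin_le_nhds (s := {(1:ℝ)}ᶜ) (a := 1))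
    norm_num [Real.one_rpow] at this
    convert this using 2
    norm_num
  refine hg.congr' ?_
  have hmem : {p : ℝ | 0 < p} ∈ nhdsWithin (1 : ℝ) {(1 : ℝ)}ᶜ :=
    nhdsWithin_le_nhds (by
      exact isOpen_lt continuous_const continuous_id |>.mem_nhds (by norm_num))
  filter_upwards [hmem, self_mem_nhdsWithin] with p hp hp1
  have hp0 : (0 : ℝ) < p := hp
  have hne : p ≠ 1 := hp1
  set q : ℝ := p ^ ((1 : ℝ) / 4) with hq
  have hq0 : 0 < q := Real.rpow_pos_of_pos hp0 _
  have hq4 : q ^ 4 = p := by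
    rw [hq, ← Real.rpow_natCast (p ^ ((1:ℝ)/4)) 4, ← Real.rpow_mul hp0.le]
    norm_num
  have hq2 : q ^ 2 = Real.sqrt p := by
    rw [Real.sqrt_eq_rpow, hq, ← Real.rpow_natCast (p ^ ((1:ℝ)/4)) 2,
      ← Real.rpow_mul hp0.le]
    norm_num
  have hqne : q ≠ 1 := by
    intro h
    apply hne
    rw [← hq4, h]; norm_num
  have hd1 : q - 1 ≠ 0 := sub_ne_zero.mpr hqne
  have hd2 : q + 1 ≠ 0 := by positivity
  have key : (q ^ 2 - 2 * q + 1) / (q ^ 4 - 2 * q ^ 2 + 1) = 1 / (q + 1) ^ 2 := by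
    have hden : q ^ 4 - 2 * q ^ 2 + 1 ≠ 0 := by
      have : q ^ 4 - 2 * q ^ 2 + 1 = (q - 1) ^ 2 * (q + 1) ^ 2 := by ring
      rw [this]
      exact mul_ne_zero (pow_ne_zero _ hd1) (pow_ne_zero _ hd2)
    rw [div_eq_div_iff hden (pow_ne_zero _ hd2)]
    ring
  rw [eq_comm, ← hq2, ← hq4]
  exact key
end

section
/- Let X, Y > 0 with P₀ = Y/X, let p > 1, P = p·P₀, P₁ = √p·P₀, and set X₁ = (X + Y/P₁)/2, Y₁ = (X·P₁ + Y)/2 (the reserves after the α = 1 trade at the arbitrageur's best response p₁ = √p). Then the arbitrage profit remaining against the new reserves satisfies the exact identity X₁·P − 2·√(X₁·Y₁·P) + Y₁ = (1/2)·Y·(√p + 1)·(p^{1/4} − 1)², and consequently the share of the unrealized profit tends to one quarter of the maximum arbitrage profit: lim_{p → 1⁺} (X₁·P − 2·√(X₁·Y₁·P) + Y₁)/(Y·(p − 2√p + 1)) = 1/4. -/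
set_option maxHeartbeats 1000000


open Real Filter

lemma aux_q4 {p : ℝ} (hp : 0 < p) : (p ^ ((1 : ℝ) / 4)) ^ (4 : ℕ) = p := by
  rw [← Real.rpow_natCast (p ^ ((1 : ℝ)/4)) 4, ← Real.rpow_mul hp.le]
  norm_num

lemma aux_q2 {p : ℝ} (hp : 0 < p) : (p ^ ((1 : ℝ) / 4)) ^ (2 : ℕ) = Real.sqrt p := by
  rw [← Real.rpow_natCast (p ^ ((1 : ℝ)/4)) 2, ← Real.rpow_mul hp.le,
    Real.sqrt_eq_rpow]
  norm_num

/-- After the `α = 1` trade at the arbitrageur's best response `p₁ = √p`, the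
arbitrage profit remaining against the new reserves equals
`(1/2)·Y·(√p + 1)·(p^{1/4} − 1)²`, and its share of the maximum arbitrage
profit `MAP = Y·(p − 2√p + 1)` tends to `1/4` as `p → 1⁺`. -/
theorem unrealized_profit_identity_and_limit (X Y : ℝ) (hX : 0 < X) (hY : 0 < Y) :
    let P₀ : ℝ := Y / X
    let rem : ℝ → ℝ := fun p =>
      let P : ℝ := p * P₀
      let P₁ : ℝ := Real.sqrt p * P₀
      let X₁ : ℝ := (X + Y / P₁) / 2
      let Y₁ : ℝ := (X * P₁ + Y) / 2
      X₁ * P - 2 * Real.sqrt (X₁ * Y₁ * P) + Y₁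
    (∀ p : ℝ, 1 < p →
      rem p = (1 / 2) * Y * (Real.sqrt p + 1) * (p ^ ((1 : ℝ) / 4) - 1) ^ 2) ∧
    Tendsto (fun p : ℝ => rem p / (Y * (p - 2 * Real.sqrt p + 1)))
      (nhdsWithin 1 (Set.Ioi 1)) (nhds (1 / 4)) := by
  intro P₀ rem
  have hP₀ : 0 < P₀ := div_pos hY hX
  have key : ∀ p : ℝ, 1 < p →
      rem p = (1 / 2) * Y * (Real.sqrt p + 1) * (p ^ ((1 : ℝ) / 4) - 1) ^ 2 := by
    intro p hp
    have hp0 : 0 < p := lt_trans one_pos hp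
    set q : ℝ := p ^ ((1 : ℝ) / 4) with hq
    have hq0 : 0 < q := Real.rpow_pos_of_pos hp0 _
    have hq2 : q ^ (2 : ℕ) = Real.sqrt p := aux_q2 hp0
    have hq4 : q ^ (4 : ℕ) = p := aux_q4 hp0
    show (X + Y / (Real.sqrt p * P₀)) / 2 * (p * P₀) -
        2 * Real.sqrt ((X + Y / (Real.sqrt p * P₀)) / 2 *
          ((X * (Real.sqrt p * P₀) + Y) / 2) * (p * P₀)) +
        (X * (Real.sqrt p * P₀) + Y) / 2 =
        (1 / 2) * Y * (Real.sqrt p + 1) * (q - 1) ^ 2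
    rw [← hq2, ← hq4]
    have hX' : X ≠ 0 := hX.ne'
    have hY' : Y ≠ 0 := hY.ne'
    have hP₀def : P₀ = Y / X := rfl
    have harg : (X + Y / (q ^ (2:ℕ) * P₀)) / 2 *
        ((X * (q ^ (2:ℕ) * P₀) + Y) / 2) * (q ^ (4:ℕ) * P₀) =
        (Y * (q ^ (2:ℕ) + 1) * q / 2) ^ 2 := by
      rw [hP₀def]; field_simp
    rw [harg, Real.sqrt_sq (by positivity)]
    rw [hP₀def]; field_simp; ring
  refine ⟨key, ?_⟩
  have heq : ∀ p ∈ Set.Ioi (1:ℝ),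
      rem p / (Y * (p - 2 * Real.sqrt p + 1)) =
        (Real.sqrt p + 1) / (2 * (p ^ ((1:ℝ)/4) + 1) ^ 2) := by
    intro p hp
    have hp : (1:ℝ) < p := hp
    have hp0 : 0 < p := lt_trans one_pos hp
    set q : ℝ := p ^ ((1 : ℝ) / 4) with hqdef
    have hq0 : 0 < q := Real.rpow_pos_of_pos hp0 _
    have hq2 : q ^ (2 : ℕ) = Real.sqrt p := aux_q2 hp0
    have hq4 : q ^ (4 : ℕ) = p := aux_q4 hp0
    have hq1 : 1 < q :=
      (Real.one_lt_rpow_iff_of_pos hp0).mpr (Or.inl ⟨hp, by norm_num⟩)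
    rw [key p hp, ← hqdef, ← hq2, ← hq4]
    have hden : Y * (q ^ (4:ℕ) - 2 * q ^ (2:ℕ) + 1) =
        Y * ((q - 1) * (q + 1)) ^ 2 := by ring
    rw [hden]
    have h1 : (q - 1) ≠ 0 := sub_ne_zero.mpr hq1.ne'
    have h2 : (q + 1) ≠ 0 := by positivity
    field_simp
  have hg : Tendsto (fun p : ℝ => (Real.sqrt p + 1) / (2 * (p ^ ((1:ℝ)/4) + 1) ^ 2))
      (nhdsWithin 1 (Set.Ioi 1)) (nhds (1 / 4)) := by
    have hc : ContinuousAt (fun p : ℝ => (Real.sqrt p + 1) / (2 * (p ^ ((1:ℝ)/4) + 1) ^ 2)) 1 := by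
      have h1 : ContinuousAt (fun p : ℝ => p ^ ((1:ℝ)/4)) 1 :=
        Real.continuousAt_rpow_const 1 _ (Or.inl one_ne_zero)
      have h2 : ContinuousAt Real.sqrt 1 := Real.continuous_sqrt.continuousAt
      apply ContinuousAt.div
      · exact h2.add continuousAt_const
      · exact continuousAt_const.mul ((h1.add continuousAt_const).pow 2)
      · norm_num
    have ht := (hc.continuousWithinAt (s := Set.Ioi (1:ℝ))).tendsto
    have hval : (Real.sqrt (1:ℝ) + 1) / (2 * ((1:ℝ) ^ ((1:ℝ)/4) + 1) ^ 2) = 1/4 := by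
      norm_num
    rwa [hval] at ht
  exact Tendsto.congr' (Filter.eventuallyEq_of_mem self_mem_nhdsWithin
    (fun p hp => (heq p hp).symm)) hg
end
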